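/- arXiv:0806.0041 — 3 statements merged into one kernel-verified Lean document; each statement's English description precedes it below -/
import Mathlib

section
/- Let ρ, σ : A → B be parallel ring homomorphisms and let R = Hom(ρ,ρ) and S = Hom(σ,σ) be the intertwiner endomorphism rings (subrings of B). If ρ ≤ σ and σ ≤ ρ, then R and S are Morita equivalent rings. -/
open CategoryTheory

/-- `t` is an intertwiner from the ring homomorphism `α` to the ring homomorphism `β`. -/
def IsIntertwiner {A B : Type*} [Ring A] [Ring B] (α β : A →+* B) (t : B) : Prop :=
  ∀ a : A, t * α a = β a * t

/-- `ρ ≤ σ` for parallel ring homomorphisms: there is a direct summand diagram. -/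
def RingHomLE {A B : Type*} [Ring A] [Ring B] (ρ σ : A →+* B) : Prop :=
  ∃ (n : ℕ) (b a : Fin n → B),
    (∀ i, IsIntertwiner ρ σ (b i)) ∧ (∀ i, IsIntertwiner σ ρ (a i)) ∧
    (∑ i, a i * b i) = 1

/-- The intertwiner endomorphism ring `Hom(σ,σ)` as a subring of `B`. -/
def EndSubring {A B : Type*} [Ring A] [Ring B] (σ : A →+* B) : Subring B where
  carrier := {t | IsIntertwiner σ σ t}
  mul_mem' := by
    intro x y hx hy a
    rw [mul_assoc, hy a, ← mul_assoc, hx a, mul_assoc]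
  one_mem' := by intro a; rw [one_mul, mul_one]
  add_mem' := by
    intro x y hx hy a
    simp only [add_mul, mul_add, hx a, hy a]
  zero_mem' := by intro a; simp
  neg_mem' := by
    intro x hx a
    simp only [neg_mul, mul_neg, hx a]

universe u v

/-!
`P = Hom(σ, ρ)` is an `(R, S)`-sub-bimodule of `B` and `Q = Hom(ρ, σ)` an `(S, R)`-sub-bimodule,
with `P Q ⊆ R` and `Q P ⊆ S`. A direct summand diagram for `ρ ≤ σ` writes `1 = ∑ aᵢ bᵢ` with
`aᵢ ∈ P`, `bᵢ ∈ Q`, and then `x ↦ (q ↦ (p ↦ (p q) • x))` is an isomorphism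
`X ≅ Hom_S(Q, Hom_R(P, X))` of left `R`-modules with inverse `Φ ↦ ∑ Φ(bᵢ)(aᵢ)`.
Symmetrically `σ ≤ ρ` gives `Y ≅ Hom_R(P, Hom_S(Q, Y))`, so `Hom_R(P, -)` and `Hom_S(Q, -)`
are inverse equivalences.
-/

noncomputable section

variable {B : Type u} [Ring B]

structure SubBimodule (R S : Subring B) extends Submodule R B where
  mul_mem_right : ∀ {p s : B}, p ∈ carrier → s ∈ S → p * s ∈ carrier

namespace SubBimodule

variable {R S : Subring B} (P : SubBimodule R S)

def mulRight (s : S) : Module.End R P.toSubmodule where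
  toFun p := ⟨p * s, P.mul_mem_right p.2 s.2⟩
  map_add' p p' := Subtype.ext (add_mul (p : B) p' s)
  map_smul' r p := Subtype.ext (mul_assoc (r : B) p s)

/-- `(Module.End R P)ᵈᵐᵃ` acts on maps out of `P` by precomposition; restricting scalars along
this ring map makes `Hom_R(P, X)` a left `S`-module. -/
def mulRightHom : S →+* (Module.End R P.toSubmodule)ᵈᵐᵃ where
  toFun s := DomMulAct.mk (P.mulRight s)
  map_one' := congrArg DomMulAct.mk (LinearMap.ext fun p => Subtype.ext (mul_one (p : B)))
  map_mul' s t := congrArg DomMulAct.mk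
    (LinearMap.ext fun p => Subtype.ext (mul_assoc (p : B) s t).symm)
  map_zero' := congrArg DomMulAct.mk (LinearMap.ext fun p => Subtype.ext (mul_zero (p : B)))
  map_add' s t := congrArg DomMulAct.mk
    (LinearMap.ext fun p => Subtype.ext (mul_add (p : B) s t))

def postcomp {X Y : Type*} [AddCommGroup X] [Module R X] [AddCommGroup Y] [Module R Y]
    (f : X →ₗ[R] Y) :
    (P.toSubmodule →ₗ[R] X) →ₗ[(Module.End R P.toSubmodule)ᵈᵐᵃ] (P.toSubmodule →ₗ[R] Y) where
  toFun := f.comp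
  map_add' g g' := LinearMap.comp_add g g' f
  map_smul' _ _ := rfl

def homFunctor : ModuleCat.{u} R ⥤ ModuleCat.{u} S :=
  ({ obj X := ModuleCat.of _ (P.toSubmodule →ₗ[R] X)
     map f := ModuleCat.ofHom (P.postcomp f.hom) } :
    ModuleCat.{u} R ⥤ ModuleCat.{u} (Module.End R P.toSubmodule)ᵈᵐᵃ) ⋙
  ModuleCat.restrictScalars P.mulRightHom

variable {P} {X : ModuleCat.{u} R}

instance : FunLike (P.homFunctor.obj X) P.toSubmodule X :=
  inferInstanceAs (FunLike (P.toSubmodule →ₗ[R] X) P.toSubmodule X)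

instance : LinearMapClass (P.homFunctor.obj X) R P.toSubmodule X :=
  inferInstanceAs (LinearMapClass (P.toSubmodule →ₗ[R] X) R P.toSubmodule X)

lemma homFunctor_obj_ext {f g : P.homFunctor.obj X} (h : ∀ p, f p = g p) : f = g :=
  LinearMap.ext h

@[simp]
lemma homFunctor_obj_smul_apply (s : S) (f : P.homFunctor.obj X) (p : P.toSubmodule) :
    (s • f) p = f (P.mulRight s p) := rfl

@[simp]
lemma homFunctor_obj_sum_apply {ι : Type*} (t : Finset ι) (f : ι → P.homFunctor.obj X)
    (p : P.toSubmodule) : (∑ i ∈ t, f i) p = ∑ i ∈ t, f i p :=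
  LinearMap.sum_apply (M₂ := X) t f p

end SubBimodule

structure MoritaContext (R S : Subring B) where
  P : SubBimodule R S
  Q : SubBimodule S R
  mul_mem_left : ∀ {p q : B}, p ∈ P.toSubmodule → q ∈ Q.toSubmodule → p * q ∈ R
  mul_mem_right : ∀ {q p : B}, q ∈ Q.toSubmodule → p ∈ P.toSubmodule → q * p ∈ S

namespace MoritaContext

variable {R S : Subring B} (M : MoritaContext R S)

def symm : MoritaContext S R where
  P := M.Q
  Q := M.P
  mul_mem_left := M.mul_mem_right
  mul_mem_right := M.mul_mem_left

def pair (p : M.P.toSubmodule) (q : M.Q.toSubmodule) : R := ⟨p * q, M.mul_mem_left p.2 q.2⟩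

@[simp]
lemma coe_pair (p : M.P.toSubmodule) (q : M.Q.toSubmodule) : (M.pair p q : B) = p * q := rfl

@[simp]
lemma coe_symm_pair (q : M.Q.toSubmodule) (p : M.P.toSubmodule) :
    (M.symm.pair q p : B) = q * p := rfl

lemma pair_add_left (p p' : M.P.toSubmodule) (q : M.Q.toSubmodule) :
    M.pair (p + p') q = M.pair p q + M.pair p' q := Subtype.ext (add_mul (p : B) p' q)

lemma pair_add_right (p : M.P.toSubmodule) (q q' : M.Q.toSubmodule) :
    M.pair p (q + q') = M.pair p q + M.pair p q' := Subtype.ext (mul_add (p : B) q q')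

lemma pair_smul_left (r : R) (p : M.P.toSubmodule) (q : M.Q.toSubmodule) :
    M.pair (r • p) q = r * M.pair p q := Subtype.ext (mul_assoc (r : B) p q)

lemma pair_mulRight_left (s : S) (p : M.P.toSubmodule) (q : M.Q.toSubmodule) :
    M.pair (M.P.mulRight s p) q = M.pair p (s • q) := Subtype.ext (mul_assoc (p : B) s q)

lemma pair_mulRight_right (r : R) (p : M.P.toSubmodule) (q : M.Q.toSubmodule) :
    M.pair p (M.Q.mulRight r q) = M.pair p q * r := Subtype.ext (mul_assoc (p : B) q r).symm

lemma pair_smul (p p' : M.P.toSubmodule) (q : M.Q.toSubmodule) :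
    M.pair p q • p' = M.P.mulRight (M.symm.pair q p') p := Subtype.ext (mul_assoc (p : B) q p')

section UnitIso

variable {n : ℕ} {a : Fin n → M.P.toSubmodule} {b : Fin n → M.Q.toSubmodule}

lemma sum_pair_eq_one (hab : ∑ i, (a i : B) * b i = 1) : ∑ i, M.pair (a i) (b i) = 1 :=
  Subtype.ext (by simpa using hab)

lemma sum_pair_smul (hab : ∑ i, (a i : B) * b i = 1) (q : M.Q.toSubmodule) :
    ∑ i, M.symm.pair q (a i) • b i = q := by
  apply Subtype.ext
  calc ((∑ i, M.symm.pair q (a i) • b i : M.Q.toSubmodule) : B)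
      = q * ∑ i, (a i : B) * b i := by simp [Finset.mul_sum, mul_assoc, Subring.smul_def]
    _ = q := by rw [hab, mul_one]

variable {X : ModuleCat.{u} R}

def pairSMul (q : M.Q.toSubmodule) (x : X) : M.P.toSubmodule →ₗ[R] X where
  toFun p := M.pair p q • x
  map_add' p p' := by rw [pair_add_left, add_smul]
  map_smul' r p := by rw [pair_smul_left, mul_smul, RingHom.id_apply]

def unitApp (x : X) : M.Q.toSubmodule →ₗ[S] M.P.homFunctor.obj X where
  toFun q := M.pairSMul q x
  map_add' q q' := LinearMap.ext fun p => by
    change M.pair p (q + q') • x = M.pair p q • x + M.pair p q' • x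
    rw [pair_add_right, add_smul]
  map_smul' s q := LinearMap.ext fun p => by
    change M.pair p (s • q) • x = M.pair (M.P.mulRight s p) q • x
    rw [pair_mulRight_left]

def unit : X →ₗ[R] M.Q.homFunctor.obj (M.P.homFunctor.obj X) where
  toFun := M.unitApp
  map_add' x y := LinearMap.ext fun q => LinearMap.ext fun p => smul_add _ x y
  map_smul' r x := LinearMap.ext fun q => LinearMap.ext fun p => by
    change M.pair p q • r • x = M.pair p (M.Q.mulRight r q) • x
    rw [pair_mulRight_right, mul_smul]

variable (a b) in
def unitInv (Φ : M.Q.toSubmodule →ₗ[S] M.P.homFunctor.obj X) : X :=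
  ∑ i, Φ (b i) (a i)

lemma unitInv_unit (hab : ∑ i, (a i : B) * b i = 1) (x : X) :
    M.unitInv a b (M.unit x) = x := by
  change ∑ i, M.pair (a i) (b i) • x = x
  rw [← Finset.sum_smul, M.sum_pair_eq_one hab, one_smul]

lemma unit_unitInv (hab : ∑ i, (a i : B) * b i = 1)
    (Φ : M.Q.toSubmodule →ₗ[S] M.P.homFunctor.obj X) : M.unit (M.unitInv a b Φ) = Φ := by
  refine LinearMap.ext fun q => SubBimodule.homFunctor_obj_ext fun p => ?_
  change M.pair p q • ∑ i, Φ (b i) (a i) = Φ q p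
  calc M.pair p q • ∑ i, Φ (b i) (a i)
      = ∑ i, Φ (b i) (M.P.mulRight (M.symm.pair q (a i)) p) := by
        simp only [Finset.smul_sum, ← map_smul, pair_smul]
    _ = Φ (∑ i, M.symm.pair q (a i) • b i) p := by
        simp only [map_sum, map_smul, SubBimodule.homFunctor_obj_sum_apply,
          SubBimodule.homFunctor_obj_smul_apply]
    _ = Φ q p := by rw [M.sum_pair_smul hab]

variable (X) in
def unitLinearEquiv (hab : ∑ i, (a i : B) * b i = 1) :
    X ≃ₗ[R] M.Q.homFunctor.obj (M.P.homFunctor.obj X) where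
  __ := M.unit
  invFun := M.unitInv a b
  left_inv := M.unitInv_unit hab
  right_inv := M.unit_unitInv hab

def unitIso (hab : ∑ i, (a i : B) * b i = 1) :
    𝟭 (ModuleCat.{u} R) ≅ M.P.homFunctor ⋙ M.Q.homFunctor :=
  NatIso.ofComponents (fun X => (M.unitLinearEquiv X hab).toModuleIso) fun f => by
    ext x
    refine SubBimodule.homFunctor_obj_ext fun q => SubBimodule.homFunctor_obj_ext fun p => ?_
    exact (map_smul f.hom _ x).symm

end UnitIso

theorem nonempty_equivalence
    (hPQ : ∃ (n : ℕ) (a : Fin n → M.P.toSubmodule) (b : Fin n → M.Q.toSubmodule),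
      ∑ i, (a i : B) * b i = 1)
    (hQP : ∃ (n : ℕ) (b : Fin n → M.Q.toSubmodule) (a : Fin n → M.P.toSubmodule),
      ∑ i, (b i : B) * a i = 1) :
    Nonempty (ModuleCat.{u} R ≌ ModuleCat.{u} S) := by
  obtain ⟨n, a, b, hab⟩ := hPQ
  obtain ⟨m, d, c, hdc⟩ := hQP
  exact ⟨.mk M.P.homFunctor M.Q.homFunctor (M.unitIso hab) (M.symm.unitIso hdc).symm⟩

end MoritaContext

section Intertwiner

variable {A : Type*} [Ring A] {α β γ : A →+* B} {s t : B}

lemma IsIntertwiner.mul (ht : IsIntertwiner β γ t) (hs : IsIntertwiner α β s) :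
    IsIntertwiner α γ (t * s) :=
  fun x => by rw [mul_assoc, hs x, ← mul_assoc, ht x, mul_assoc]

lemma IsIntertwiner.add (hs : IsIntertwiner α β s) (ht : IsIntertwiner α β t) :
    IsIntertwiner α β (s + t) :=
  fun x => by rw [add_mul, mul_add, hs x, ht x]

lemma isIntertwiner_zero : IsIntertwiner α β 0 :=
  fun x => by rw [zero_mul, mul_zero]

variable (α β) in
def intertwinerSubBimodule : SubBimodule (EndSubring β) (EndSubring α) where
  carrier := {t | IsIntertwiner α β t}
  add_mem' := IsIntertwiner.add
  zero_mem' := isIntertwiner_zero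
  smul_mem' r _ ht := IsIntertwiner.mul r.2 ht
  mul_mem_right := IsIntertwiner.mul

def intertwinerMoritaContext (ρ σ : A →+* B) : MoritaContext (EndSubring ρ) (EndSubring σ) where
  P := intertwinerSubBimodule σ ρ
  Q := intertwinerSubBimodule ρ σ
  mul_mem_left := IsIntertwiner.mul
  mul_mem_right := IsIntertwiner.mul

end Intertwiner

end

/-- If `ρ ≤ σ` and `σ ≤ ρ` then the intertwiner endomorphism rings `R = Hom(ρ,ρ)` and
`S = Hom(σ,σ)` are Morita equivalent: their categories of left modules are equivalent. -/
theorem stmt_6 {A : Type v} {B : Type u} [Ring A] [Ring B] (ρ σ : A →+* B)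
    (h₁ : RingHomLE ρ σ) (h₂ : RingHomLE σ ρ) :
    Nonempty (ModuleCat.{u} (EndSubring ρ) ≌ ModuleCat.{u} (EndSubring σ)) := by
  obtain ⟨n, b, a, hb, ha, hab⟩ := h₁
  obtain ⟨m, a', b', ha', hb', hba⟩ := h₂
  exact (intertwinerMoritaContext ρ σ).nonempty_equivalence
    ⟨n, fun i => ⟨a i, ha i⟩, fun i => ⟨b i, hb i⟩, hab⟩
    ⟨m, fun i => ⟨b' i, hb' i⟩, fun i => ⟨a' i, ha' i⟩, hba⟩
end

section
/- Let (m, e) : λ ⊣ ρ be an adjunction in the 2-category of rings, with λ : A → B and ρ : B → A. Set γ = λ∘ρ and d = λ(m). Then (γ, d, e) is a comonoid in the endomorphism category of B, and the Kleisli comparison map κ : B_γ → A, b ↦ ρ(b)·m, is a ring isomorphism with inverse a ↦ e·λ(a), satisfying κ(b·e) = ρ(b) for all b ∈ B. -/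
/-- `(m, e) : l ⊣ r` is an adjunction in the 2-category of rings. -/
def IsRingAdjunction {A B : Type*} [Ring A] [Ring B]
    (l : A →+* B) (r : B →+* A) (m : A) (e : B) : Prop :=
  (∀ b : B, e * l (r b) = b * e) ∧ (∀ a : A, m * a = r (l a) * m) ∧
    r e * m = 1 ∧ e * l m = 1

/-- `(γ, d, e)` is a comonoid in the endomorphism category of the ring `B`. -/
def IsComonoid {B : Type*} [Ring B] (γ : B →+* B) (d e : B) : Prop :=
  (∀ b : B, d * γ b = γ (γ b) * d) ∧ (∀ b : B, e * γ b = b * e) ∧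
    γ d * d = d * d ∧ e * d = 1 ∧ γ e * d = 1

/-- The Kleisli multiplication `b₁ ⋆ b₂ = b₁·γ(b₂)·d` on `B`. -/
def kstar {B : Type*} [Ring B] (γ : B →+* B) (d b₁ b₂ : B) : B := b₁ * γ b₂ * d

/-!
Every identity is a short rewrite with the naturality of the unit, `m·a = ρλ(a)·m`, the
naturality of the counit, `e·λρ(b) = b·e`, and the two triangle identities. Applying `λ` to
these yields the comonoid axioms for `(λρ, λ(m), e)`. For the comparison map
`κ(b) = ρ(b)·m`, naturality of `m` at `m` gives `ρλ(m)·m = m·m`, which makes `κ` carry the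
Kleisli product to the product of `A`, and the triangle identities make `a ↦ e·λ(a)` a
two-sided inverse of `κ`.
-/

namespace IsRingAdjunction

variable {A B : Type*} [Ring A] [Ring B] {l : A →+* B} {r : B →+* A} {m : A} {e : B}

theorem isComonoid (h : IsRingAdjunction l r m e) : IsComonoid (l.comp r) (l m) e := by
  obtain ⟨he, hm, h1, h2⟩ := h
  refine ⟨fun b ↦ ?_, he, ?_, h2, ?_⟩
  · simpa only [RingHom.comp_apply, map_mul] using congrArg l (hm (r b))
  · simpa only [RingHom.comp_apply, map_mul] using (congrArg l (hm m)).symm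
  · simpa only [RingHom.comp_apply, map_mul, map_one] using congrArg l h1

theorem map_kstar_mul_unit (h : IsRingAdjunction l r m e) (b₁ b₂ : B) :
    r (kstar (l.comp r) (l m) b₁ b₂) * m = (r b₁ * m) * (r b₂ * m) := by
  obtain ⟨-, hm, -, -⟩ := h
  calc r (kstar (l.comp r) (l m) b₁ b₂) * m
      = r b₁ * (r (l (r b₂)) * (r (l m) * m)) := by
        simp only [kstar, RingHom.comp_apply, map_mul, mul_assoc]
    _ = r b₁ * ((m * r b₂) * m) := by rw [← hm m, ← mul_assoc (r (l (r b₂))), ← hm (r b₂)]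
    _ = (r b₁ * m) * (r b₂ * m) := by simp only [mul_assoc]

theorem map_counit_mul_map_mul_unit (h : IsRingAdjunction l r m e) (a : A) :
    r (e * l a) * m = a := by
  obtain ⟨-, hm, h1, -⟩ := h
  rw [map_mul, mul_assoc, ← hm a, ← mul_assoc, h1, one_mul]

theorem counit_mul_map_map_mul_unit (h : IsRingAdjunction l r m e) (b : B) :
    e * l (r b * m) = b := by
  obtain ⟨he, -, -, h2⟩ := h
  rw [map_mul, ← mul_assoc, he, mul_assoc, h2, mul_one]

theorem map_mul_counit_mul_unit (h : IsRingAdjunction l r m e) (b : B) :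
    r (b * e) * m = r b := by
  obtain ⟨-, -, h1, -⟩ := h
  rw [map_mul, mul_assoc, h1, mul_one]

end IsRingAdjunction

/-- Given an adjunction `(m,e) : λ ⊣ ρ` in the 2-category of rings, `γ = λ∘ρ` with
`d = λ(m)` and counit `e` is a comonoid in the endomorphism category of `B`, and the
Kleisli comparison map `κ : B_γ → A`, `b ↦ ρ(b)·m`, is a ring isomorphism (from the
Kleisli ring `(B, ⋆, e)` to `A`) with inverse `a ↦ e·λ(a)`, satisfying
`κ(ρ_γ(b)) = κ(b·e) = ρ(b)`. -/
theorem stmt_11 {A B : Type*} [Ring A] [Ring B]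
    (l : A →+* B) (r : B →+* A) (m : A) (e : B) (h : IsRingAdjunction l r m e) :
    IsComonoid (l.comp r) (l m) e ∧
    -- κ is multiplicative from the Kleisli ring and preserves the unit `e`
    (∀ b₁ b₂ : B, r (kstar (l.comp r) (l m) b₁ b₂) * m = (r b₁ * m) * (r b₂ * m)) ∧
    (r e * m = 1) ∧
    -- κ is additive
    (∀ b₁ b₂ : B, r (b₁ + b₂) * m = r b₁ * m + r b₂ * m) ∧
    -- κ is bijective with inverse `a ↦ e·λ(a)`
    (∀ a : A, r (e * l a) * m = a) ∧
    (∀ b : B, e * l (r b * m) = b) ∧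
    -- κ compares the Kleisli extension `ρ_γ : b ↦ b·e` with `ρ`
    (∀ b : B, r (b * e) * m = r b) :=
  ⟨h.isComonoid, h.map_kstar_mul_unit, h.2.2.1, fun b₁ b₂ ↦ by rw [map_add, add_mul],
    h.map_counit_mul_map_mul_unit, h.counit_mul_map_map_mul_unit, h.map_mul_counit_mul_unit⟩
end

section
/- If (m, e) : λ ⊣ ρ is an adjunction in the 2-category of rings, with λ : A → B and ρ : B → A, then both λ and ρ are injective. Consequently, if (γ, d, e) is a comonoid in the endomorphism category of a ring B, then the ring endomorphism γ is injective. -/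
/-!
The triangle identities turn the unit and counit into explicit left inverses:
`a = ρ(e) · ρ(λ a) · m` and `b = e · λ(ρ b) · λ(m)`, and for a comonoid `b = e · γ(b) · d`.
-/

universe u

open Function

theorem leftInverse_of_mul_comp_eq_mul {M X : Type*} [Monoid M] {f : M → X} {g : X → M}
    {e c : M} (h : ∀ b, e * g (f b) = b * e) (hc : e * c = 1) :
    LeftInverse (fun x => e * g x * c) f := fun b => by
  simp only [h, mul_assoc, hc, mul_one]

theorem leftInverse_of_mul_eq_comp_mul {M X : Type*} [Monoid M] {f : M → X} {g : X → M}
    {m c : M} (h : ∀ a, m * a = g (f a) * m) (hc : c * m = 1) :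
    LeftInverse (fun x => c * g x * m) f := fun a => by
  simp only [mul_assoc, ← h, ← mul_assoc c, hc, one_mul]

namespace IsRingAdjunction

variable {A B : Type*} [Ring A] [Ring B] {l : A →+* B} {r : B →+* A} {m : A} {e : B}

theorem injective_left (h : IsRingAdjunction l r m e) : Injective l :=
  (leftInverse_of_mul_eq_comp_mul (g := r) h.2.1 h.2.2.1).injective

theorem injective_right (h : IsRingAdjunction l r m e) : Injective r :=
  (leftInverse_of_mul_comp_eq_mul (g := l) h.1 h.2.2.2).injective

end IsRingAdjunction

theorem IsComonoid.injective {B : Type*} [Ring B] {γ : B →+* B} {d e : B}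
    (h : IsComonoid γ d e) : Injective γ :=
  (leftInverse_of_mul_comp_eq_mul (g := id) h.2.1 h.2.2.2.1).injective

/-- If `(m, e) : λ ⊣ ρ` is an adjunction in the 2-category of rings then both `λ` and
`ρ` are injective; consequently, for any comonoid `(γ, d, e)` in the endomorphism
category of a ring `B`, the endomorphism `γ` is injective. -/
theorem stmt_14 :
    (∀ (A B : Type u) [Ring A] [Ring B] (l : A →+* B) (r : B →+* A) (m : A) (e : B),
      IsRingAdjunction l r m e → Function.Injective l ∧ Function.Injective r) ∧
    (∀ (B : Type u) [Ring B] (γ : B →+* B) (d e : B),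
      IsComonoid γ d e → Function.Injective γ) :=
  ⟨fun _ _ _ _ _ _ _ _ h => ⟨h.injective_left, h.injective_right⟩,
    fun _ _ _ _ _ h => h.injective⟩
end
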